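/- In the setting of the commutation step: let W be a Jacobi operator on ℓ²(ℤ) with a(n) = −1 and b(n) = 0 for |n| > n_max, let λ₁ = −k₁ − 1/k₁ < −2 (k₁ > 1) be its lowest eigenvalue with strictly positive eigenfunction φ, and let a₁(n) = −√(a(n)a(n+1)φ(n)φ(n+2))/φ(n+1) and b₁(n) = −a(n)(φ(n)/φ(n+1) + φ(n+1)/φ(n)) + λ₁. Then Σ_{n∈ℤ} b₁(n)² = −k₁² + 1/k₁² + Σ_{n∈ℤ} b(n)² + 2 Σ_{n∈ℤ} (a(n)² − a₁(n)²), and the (convergent) bi-infinite products satisfy Π_{n∈ℤ} a₁(n)² = (1/k₁²) Π_{n∈ℤ} a(n)². -/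

import Mathlib

/-!
Outside `[-nmax, nmax]` the eigenvalue equation is the free recurrence
`φ(n-1) + φ(n+1) = (k₁ + k₁⁻¹) φ(n)`, and square summability forces `φ(n+1) = k₁⁻¹ φ(n)` near `+∞`
and `φ(n+1) = k₁ φ(n)` near `-∞`. With `c(n) = a(n)φ(n)/φ(n+1)` and `d(n) = a(n)φ(n+1)/φ(n)`
one has `a² = c d`, `a₁² = c · d(·+1)`, `b₁ = λ₁ - c - d` and, by the eigenvalue equation,
`b = λ₁ - c(·-1) - d`. Hence `b² + 2(a² - a₁²) - b₁²` is a difference `g(n+1) - g(n)` and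
`a₁²/a² = d(n+1)/d(n)`; both telescope, and the constant values of `c` and `d` near `±∞`
produce `-k₁² + k₁⁻²` and `k₁⁻²`.
-/

open Filter

/-- `lam` is an eigenvalue of the Jacobi operator `W` on `ℓ²(ℤ)` with off-diagonal
sequence `a` and potential `b`. -/
def IsJacobiEigenvalue (a b : ℤ → ℝ) (lam : ℝ) : Prop :=
  ∃ u : ℤ → ℝ, Memℓp u 2 ∧ u ≠ 0 ∧
    ∀ n : ℤ, a (n - 1) * u (n - 1) + a n * u (n + 1) + b n * u n = lam * u n

/-- The new off-diagonal sequence `a₁(n) = −√(a(n)a(n+1)φ(n)φ(n+2))/φ(n+1)`. -/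
noncomputable def a1seq (a φ : ℤ → ℝ) : ℤ → ℝ := fun n =>
  -Real.sqrt (a n * a (n + 1) * φ n * φ (n + 2)) / φ (n + 1)

/-- The new potential `b₁(n) = −a(n)(φ(n)/φ(n+1) + φ(n+1)/φ(n)) + λ₁`. -/
noncomputable def b1seq (a φ : ℤ → ℝ) (lam1 : ℝ) : ℤ → ℝ := fun n =>
  -a n * (φ n / φ (n + 1) + φ (n + 1) / φ n) + lam1

open Finset Topology

theorem Memℓp.tendsto_cofinite_zero {ι E : Type*} [NormedAddCommGroup E] {f : ι → E}
    {p : ENNReal} (hf : Memℓp f p) (hp : 0 < p.toReal) : Tendsto f cofinite (𝓝 0) := by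
  have h := ((hf.summable hp).tendsto_cofinite_zero).rpow_const (p := p.toReal⁻¹)
    (Or.inr (inv_nonneg.2 hp.le))
  rw [Real.zero_rpow (inv_ne_zero hp.ne')] at h
  refine tendsto_zero_iff_norm_tendsto_zero.2 (h.congr fun i => ?_)
  exact Real.rpow_rpow_inv (norm_nonneg _) hp.ne'

theorem Int.eventually_atBot_and_atTop_of_lt_abs {P : ℤ → Prop} {N : ℤ}
    (h : ∀ n, N < |n| → P n) : (∀ᶠ n in atBot, P n) ∧ ∀ᶠ n in atTop, P n :=
  ⟨eventually_atBot.2 ⟨-N - 1, fun n hn => h n (lt_abs.2 (Or.inr (by omega)))⟩,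
    eventually_atTop.2 ⟨N + 1, fun n hn => h n (lt_abs.2 (Or.inl (by omega)))⟩⟩

theorem Int.summable_of_eventually_eq_zero {M : Type*} [AddCommMonoid M] [TopologicalSpace M]
    {f : ℤ → M} (hBot : ∀ᶠ n in atBot, f n = 0) (hTop : ∀ᶠ n in atTop, f n = 0) : Summable f :=
  summable_of_hasFiniteSupport <| eventually_cofinite.1 <| Int.cofinite_eq ▸
    eventually_sup.2 ⟨hBot, hTop⟩

theorem eventually_eq_zero_of_eq_mul_of_tendsto_zero {𝕜 : Type*} [NormedDivisionRing 𝕜]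
    {u : ℤ → 𝕜} {k : 𝕜} (hk : 1 ≤ ‖k‖) (hu : ∀ᶠ n in atTop, u (n + 1) = k * u n)
    (hlim : Tendsto u atTop (𝓝 0)) : ∀ᶠ n in atTop, u n = 0 := by
  obtain ⟨N, hN⟩ := eventually_atTop.1 hu
  refine eventually_atTop.2 ⟨N, fun m hm => norm_le_zero_iff.1 ?_⟩
  have hgrow : ∀ n, m ≤ n → ‖u m‖ ≤ ‖u n‖ := by
    intro n hmn
    induction n, hmn using Int.leInduction with
    | base => rfl
    | succ n hmn ih =>
      calc ‖u m‖ ≤ ‖u n‖ := ih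
        _ ≤ ‖k‖ * ‖u n‖ := le_mul_of_one_le_left (norm_nonneg _) hk
        _ = ‖u (n + 1)‖ := by rw [hN n (hm.trans hmn), norm_mul]
  exact ge_of_tendsto (tendsto_norm_zero.comp hlim) (eventually_atTop.2 ⟨m, hgrow⟩)

theorem eventually_eq_mul_succ_of_recurrence {𝕜 : Type*} [NormedField 𝕜] {ψ : ℤ → 𝕜} {k : 𝕜}
    (hk : 1 ≤ ‖k‖) (hrec : ∀ᶠ n in atTop, ψ (n - 1) + ψ (n + 1) = (k + k⁻¹) * ψ n)
    (hlim : Tendsto ψ atTop (𝓝 0)) : ∀ᶠ n in atTop, ψ n = k * ψ (n + 1) := by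
  have hk0 : k ≠ 0 := norm_pos_iff.1 (one_pos.trans_le hk)
  have hshift : Tendsto (fun n : ℤ => n + 1) atTop atTop :=
    tendsto_atTop_add_const_right _ 1 tendsto_id
  -- `kψ(n+1) - ψ(n)` only sees the growing mode `kⁿ` of the recurrence
  have hu : ∀ᶠ n in atTop, k * ψ (n + 1 + 1) - ψ (n + 1) = k * (k * ψ (n + 1) - ψ n) := by
    filter_upwards [hshift.eventually hrec] with n hn
    rw [add_sub_cancel_right] at hn
    linear_combination k * hn + ψ (n + 1) * mul_inv_cancel₀ hk0
  have hlim' : Tendsto (fun n => k * ψ (n + 1) - ψ n) atTop (𝓝 0) := by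
    simpa using ((hlim.comp hshift).const_mul k).sub hlim
  filter_upwards [eventually_eq_zero_of_eq_mul_of_tendsto_zero hk hu hlim'] with n hn
  exact (sub_eq_zero.1 hn).symm

@[to_additive]
theorem Finset.prod_Icc_mul_eq_of_mul_eq {M : Type*} [CommMonoid M] {x y e : ℤ → M}
    (h : ∀ n, x n * e n = y n * e (n + 1)) {A B : ℤ} (hAB : A ≤ B) :
    (∏ n ∈ Icc A B, x n) * e A = (∏ n ∈ Icc A B, y n) * e (B + 1) := by
  induction B, hAB using Int.leInduction with
  | base => simpa using h A
  | succ B hAB ih =>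
    rw [← insert_Icc_right_eq_Icc_add_one (by omega), prod_insert (by simp),
      prod_insert (by simp), mul_assoc, ih, mul_left_comm, h, mul_left_comm, mul_assoc]

@[to_additive]
theorem tprod_mul_eq_of_mul_eq {M : Type*} [CommMonoid M] [TopologicalSpace M]
    {x y e : ℤ → M} {L R : M} (h : ∀ n, x n * e n = y n * e (n + 1))
    (hL : ∀ᶠ n in atBot, x n = 1 ∧ y n = 1 ∧ e n = L)
    (hR : ∀ᶠ n in atTop, x n = 1 ∧ y n = 1 ∧ e n = R) :
    (∏' n, x n) * L = (∏' n, y n) * R := by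
  obtain ⟨A, hA⟩ := eventually_atBot.1 hL
  obtain ⟨B, hB⟩ := eventually_atTop.1 hR
  have hout : ∀ n ∉ Icc A (max A B), x n = 1 ∧ y n = 1 := fun n hn => by
    rw [mem_Icc, not_and_or, not_le, not_le] at hn
    rcases hn with hn | hn
    · exact ⟨(hA n hn.le).1, (hA n hn.le).2.1⟩
    · have := hB n (le_of_max_le_right hn.le)
      exact ⟨this.1, this.2.1⟩
  rw [tprod_eq_prod fun n hn => (hout n hn).1, tprod_eq_prod fun n hn => (hout n hn).2,
    ← (hA A le_rfl).2.2, ← (hB (max A B + 1) (by omega)).2.2]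
  exact prod_Icc_mul_eq_of_mul_eq h (le_max_left A B)

namespace JacobiCommutation

/-- For `(Lu)(n) = ρ(n)u(n) - σ(n)u(n+1)` with `σ² = -c` and `ρ² = -d` one has `W - λ₁ = L*L`,
and `LL* + λ₁` is the Jacobi operator with off-diagonal `a₁` and potential `b₁`. -/
noncomputable def c (a φ : ℤ → ℝ) (n : ℤ) : ℝ := a n * φ n / φ (n + 1)

noncomputable def d (a φ : ℤ → ℝ) (n : ℤ) : ℝ := a n * φ (n + 1) / φ n

noncomputable def g (a φ : ℤ → ℝ) (lam : ℝ) (n : ℤ) : ℝ :=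
  c a φ (n - 1) * (2 * lam - c a φ (n - 1) - 2 * d a φ n)

variable {a b φ : ℤ → ℝ} {lam : ℝ}

theorem sq_eq_c_mul_d (hφ : ∀ n, φ n ≠ 0) (n : ℤ) : a n ^ 2 = c a φ n * d a φ n := by
  have := hφ n; have := hφ (n + 1)
  simp only [c, d]; field_simp

theorem a1seq_sq (ha : ∀ n, a n < 0) (hφ : ∀ n, 0 < φ n) (n : ℤ) :
    a1seq a φ n ^ 2 = c a φ n * d a φ (n + 1) := by
  have hnonneg : 0 ≤ a n * a (n + 1) * φ n * φ (n + 2) := by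
    have := mul_pos_of_neg_of_neg (ha n) (ha (n + 1))
    have := hφ n; have := hφ (n + 2)
    positivity
  have := (hφ n).ne'; have := (hφ (n + 1)).ne'
  rw [a1seq, div_pow, neg_sq, Real.sq_sqrt hnonneg, c, d, add_assoc, one_add_one_eq_two]
  field_simp

theorem b1seq_eq (hφ : ∀ n, φ n ≠ 0) (n : ℤ) : b1seq a φ lam n = lam - c a φ n - d a φ n := by
  have := hφ n; have := hφ (n + 1)
  simp only [b1seq, c, d]; field_simp; ring

theorem eq_sub_c_sub_d (hφ : ∀ n, φ n ≠ 0) {n : ℤ}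
    (heig : a (n - 1) * φ (n - 1) + a n * φ (n + 1) + b n * φ n = lam * φ n) :
    b n = lam - c a φ (n - 1) - d a φ n := by
  have := hφ n
  simp only [c, d, sub_add_cancel]
  field_simp
  linear_combination heig

theorem sq_add_g_eq (ha : ∀ n, a n < 0) (hφ : ∀ n, 0 < φ n)
    (heig : ∀ n, a (n - 1) * φ (n - 1) + a n * φ (n + 1) + b n * φ n = lam * φ n) (n : ℤ) :
    b n ^ 2 + 2 * (a n ^ 2 - a1seq a φ n ^ 2) + g a φ lam n
      = b1seq a φ lam n ^ 2 + g a φ lam (n + 1) := by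
  have hφ' : ∀ n, φ n ≠ 0 := fun n => (hφ n).ne'
  rw [eq_sub_c_sub_d hφ' (heig n), sq_eq_c_mul_d hφ', a1seq_sq ha hφ, b1seq_eq hφ', g, g,
    add_sub_cancel_right]
  ring

theorem a1seq_sq_mul_d (ha : ∀ n, a n < 0) (hφ : ∀ n, 0 < φ n) (n : ℤ) :
    a1seq a φ n ^ 2 * d a φ n = a n ^ 2 * d a φ (n + 1) := by
  rw [a1seq_sq ha hφ, sq_eq_c_mul_d fun n => (hφ n).ne']
  ring

theorem eventually_atTop_succ_eq_inv_mul {k : ℝ} (hk : 1 < k)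
    (ha : ∀ᶠ n in atTop, a n = -1) (hb : ∀ᶠ n in atTop, b n = 0)
    (heig : ∀ n, a (n - 1) * φ (n - 1) + a n * φ (n + 1) + b n * φ n = -(k + k⁻¹) * φ n)
    (hlim : Tendsto φ atTop (𝓝 0)) : ∀ᶠ n in atTop, φ (n + 1) = k⁻¹ * φ n := by
  have hk' : 1 ≤ ‖k‖ := by rw [Real.norm_of_nonneg (by linarith)]; exact hk.le
  have hrec : ∀ᶠ n in atTop, φ (n - 1) + φ (n + 1) = (k + k⁻¹) * φ n := by
    filter_upwards [(tendsto_atTop_add_const_right _ (-1) tendsto_id).eventually ha, ha, hb]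
      with n ha₁ ha₂ hbn
    have := heig n
    rw [id, ← sub_eq_add_neg] at ha₁
    rw [ha₁, ha₂, hbn] at this
    linarith
  filter_upwards [eventually_eq_mul_succ_of_recurrence hk' hrec hlim] with n hn
  rw [hn, inv_mul_cancel_left₀ (by positivity)]

theorem eventually_atBot_succ_eq_mul {k : ℝ} (hk : 1 < k)
    (ha : ∀ᶠ n in atBot, a n = -1) (hb : ∀ᶠ n in atBot, b n = 0)
    (heig : ∀ n, a (n - 1) * φ (n - 1) + a n * φ (n + 1) + b n * φ n = -(k + k⁻¹) * φ n)
    (hlim : Tendsto φ atBot (𝓝 0)) : ∀ᶠ n in atBot, φ (n + 1) = k * φ n := by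
  have hk' : 1 ≤ ‖k‖ := by rw [Real.norm_of_nonneg (by linarith)]; exact hk.le
  have hrec : ∀ᶠ n in atTop, φ (-(n - 1)) + φ (-(n + 1)) = (k + k⁻¹) * φ (-n) := by
    filter_upwards [tendsto_neg_atTop_atBot.eventually
        ((tendsto_atBot_add_const_right _ (-1) tendsto_id).eventually ha),
      tendsto_neg_atTop_atBot.eventually ha, tendsto_neg_atTop_atBot.eventually hb]
      with n ha₁ ha₂ hbn
    have := heig (-n)
    rw [id, ← sub_eq_add_neg] at ha₁
    rw [ha₁, ha₂, hbn] at this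
    rw [show -(n - 1) = -n + 1 by ring, show -(n + 1) = -n - 1 by ring]
    linarith
  have hneg := tendsto_neg_atBot_atTop.comp (tendsto_atBot_add_const_right _ (1 : ℤ) tendsto_id)
  filter_upwards [hneg.eventually (eventually_eq_mul_succ_of_recurrence (ψ := fun n => φ (-n))
    hk' hrec (hlim.comp tendsto_neg_atTop_atBot))] with n hn
  simpa using hn

theorem eventually_c_eq_and_d_eq {l : Filter ℤ} {ρ : ℝ} (hφ : ∀ n, φ n ≠ 0)
    (ha : ∀ᶠ n in l, a n = -1) (hρ : ∀ᶠ n in l, φ (n + 1) = ρ * φ n) :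
    ∀ᶠ n in l, c a φ n = -ρ⁻¹ ∧ d a φ n = -ρ := by
  filter_upwards [ha, hρ] with n han hn
  have hρ0 : ρ ≠ 0 := by rintro rfl; exact hφ (n + 1) (by simpa using hn)
  have := hφ n
  simp only [c, d, han, hn]
  constructor <;> field_simp

section Tails

variable {l : Filter ℤ} {ρ : ℝ}

theorem eventually_a1seq_sq_eq_one (hl : ∀ m : ℤ, Tendsto (· + m) l l)
    (ha_neg : ∀ n, a n < 0) (hφ : ∀ n, 0 < φ n) (ha : ∀ᶠ n in l, a n = -1)
    (hρ : ∀ᶠ n in l, φ (n + 1) = ρ * φ n) : ∀ᶠ n in l, a1seq a φ n ^ 2 = 1 := by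
  have hcd := eventually_c_eq_and_d_eq (fun n => (hφ n).ne') ha hρ
  filter_upwards [hcd, (hl 1).eventually hcd, hρ] with n hn hn₁ hρn
  have hρ0 : ρ ≠ 0 := by rintro rfl; exact (hφ (n + 1)).ne' (by simpa using hρn)
  rw [a1seq_sq ha_neg hφ, hn.1, hn₁.2]
  field_simp

theorem eventually_sum_tail (hl : ∀ m : ℤ, Tendsto (· + m) l l)
    (ha_neg : ∀ n, a n < 0) (hφ : ∀ n, 0 < φ n) (ha : ∀ᶠ n in l, a n = -1)
    (hb : ∀ᶠ n in l, b n = 0) (hρ : ∀ᶠ n in l, φ (n + 1) = ρ * φ n) (hlam : lam = -(ρ + ρ⁻¹)) :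
    ∀ᶠ n in l, b n ^ 2 + 2 * (a n ^ 2 - a1seq a φ n ^ 2) = 0 ∧ b1seq a φ lam n ^ 2 = 0 ∧
      g a φ lam n = ρ⁻¹ ^ 2 := by
  have hcd := eventually_c_eq_and_d_eq (fun n => (hφ n).ne') ha hρ
  filter_upwards [ha, hb, hcd, (hl (-1)).eventually hcd,
    eventually_a1seq_sq_eq_one hl ha_neg hφ ha hρ] with n han hbn hn hn₁ ha1
  rw [← sub_eq_add_neg] at hn₁
  refine ⟨by rw [han, hbn, ha1]; ring, ?_, ?_⟩
  · rw [b1seq_eq (fun n => (hφ n).ne'), hn.1, hn.2, hlam]; ring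
  · rw [g, hn₁.1, hn.2, hlam]; ring

theorem eventually_prod_tail (hl : ∀ m : ℤ, Tendsto (· + m) l l)
    (ha_neg : ∀ n, a n < 0) (hφ : ∀ n, 0 < φ n) (ha : ∀ᶠ n in l, a n = -1)
    (hρ : ∀ᶠ n in l, φ (n + 1) = ρ * φ n) :
    ∀ᶠ n in l, a1seq a φ n ^ 2 = 1 ∧ a n ^ 2 = 1 ∧ d a φ n = -ρ := by
  filter_upwards [eventually_a1seq_sq_eq_one hl ha_neg hφ ha hρ, ha,
    eventually_c_eq_and_d_eq (fun n => (hφ n).ne') ha hρ] with n ha1 han hn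
  exact ⟨ha1, by rw [han]; norm_num, hn.2⟩

end Tails

end JacobiCommutation

open JacobiCommutation

theorem jacobi_commutation_sum_product_identities
    (a b : ℤ → ℝ) (nmax : ℕ)
    (ha_neg : ∀ n, a n < 0)
    (ha : ∀ n : ℤ, (nmax : ℤ) < |n| → a n = -1)
    (hb : ∀ n : ℤ, (nmax : ℤ) < |n| → b n = 0)
    (k1 : ℝ) (hk1 : 1 < k1)
    (lam1 : ℝ) (hlam1 : lam1 = -k1 - 1 / k1)
    (φ : ℤ → ℝ) (hφ_pos : ∀ n, 0 < φ n) (hφ_mem : Memℓp φ 2)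
    (hφ_eig : ∀ n : ℤ, a (n - 1) * φ (n - 1) + a n * φ (n + 1) + b n * φ n = lam1 * φ n) :
    (∑' n : ℤ, (b1seq a φ lam1 n) ^ 2)
        = -k1 ^ 2 + 1 / k1 ^ 2 + (∑' n : ℤ, b n ^ 2)
          + 2 * ∑' n : ℤ, (a n ^ 2 - (a1seq a φ n) ^ 2)
    ∧ (∏' n : ℤ, (a1seq a φ n) ^ 2) = (1 / k1 ^ 2) * ∏' n : ℤ, a n ^ 2 := by
  have hlam : lam1 = -(k1 + k1⁻¹) := by rw [hlam1, one_div]; ring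
  obtain ⟨haBot, haTop⟩ := Int.eventually_atBot_and_atTop_of_lt_abs ha
  obtain ⟨hbBot, hbTop⟩ := Int.eventually_atBot_and_atTop_of_lt_abs hb
  obtain ⟨hφBot, hφTop⟩ :=
    tendsto_sup.1 (Int.cofinite_eq ▸ hφ_mem.tendsto_cofinite_zero (by norm_num))
  have hTop := eventually_atTop_succ_eq_inv_mul hk1 haTop hbTop (hlam ▸ hφ_eig) hφTop
  have hBot := eventually_atBot_succ_eq_mul hk1 haBot hbBot (hlam ▸ hφ_eig) hφBot
  have hlTop : ∀ m : ℤ, Tendsto (· + m) atTop atTop :=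
    fun m => tendsto_atTop_add_const_right _ m tendsto_id
  have hlBot : ∀ m : ℤ, Tendsto (· + m) atBot atBot :=
    fun m => tendsto_atBot_add_const_right _ m tendsto_id
  have hPBot := eventually_prod_tail hlBot ha_neg hφ_pos haBot hBot
  have hPTop := eventually_prod_tail hlTop ha_neg hφ_pos haTop hTop
  constructor
  · have hsum := tsum_add_eq_of_add_eq (sq_add_g_eq ha_neg hφ_pos hφ_eig)
      (eventually_sum_tail hlBot ha_neg hφ_pos haBot hbBot hBot hlam)
      (eventually_sum_tail hlTop ha_neg hφ_pos haTop hbTop hTop (by rw [inv_inv, hlam]; ring))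
    have hsb : Summable fun n => b n ^ 2 := Int.summable_of_eventually_eq_zero
      (hbBot.mono fun n h => by simp [h]) (hbTop.mono fun n h => by simp [h])
    have hsa : Summable fun n => a n ^ 2 - a1seq a φ n ^ 2 := Int.summable_of_eventually_eq_zero
      (hPBot.mono fun n h => by simp [h.1, h.2.1]) (hPTop.mono fun n h => by simp [h.1, h.2.1])
    rw [hsb.tsum_add (hsa.mul_left 2), tsum_mul_left, inv_inv] at hsum
    rw [one_div, ← inv_pow]
    linarith
  · have hprod := tprod_mul_eq_of_mul_eq (a1seq_sq_mul_d ha_neg hφ_pos) hPBot hPTop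
    have hk0 : k1 ≠ 0 := by positivity
    field_simp at hprod ⊢
    linarith
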